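/- Let U ⊆ ℂ² ⊗ ℂ³ be a 2-dimensional complex linear subspace with exactly one decomposable direction, and let V₀ ⊆ ℂ³ be the smallest linear subspace with U ⊆ ℂ² ⊗ V₀. Then dim V₀ ∈ {2, 3}; moreover, dim V₀ = 2 if and only if U admits a presentation U = span{h₁ ⊗ x + h₂ ⊗ z, h₂ ⊗ x} with (h₁, h₂) a basis of ℂ² and (x, z) linearly independent in ℂ³, and dim V₀ = 3 if and only if U admits a presentation U = span{h₁ ⊗ x + h₂ ⊗ z, h₂ ⊗ x′} with (h₁, h₂) a basis of ℂ² and (x, x′, z) a basis of ℂ³. In particular the two normal forms are mutually exclusive. -/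

import Mathlib

open Matrix

/-- A nonzero element of `ℂ² ⊗ ℂ³`, viewed as a 2×3 complex matrix, is decomposable if it
is an outer product `h ⊗ x` with `h ≠ 0` and `x ≠ 0` (equivalently, it has rank 1). -/
def Decomposable (A : Matrix (Fin 2) (Fin 3) ℂ) : Prop :=
  ∃ (h : Fin 2 → ℂ) (x : Fin 3 → ℂ), h ≠ 0 ∧ x ≠ 0 ∧ A = vecMulVec h x

/-- The decomposable directions of a subspace `U ⊆ ℂ² ⊗ ℂ³`: the 1-dimensional subspaces
of `U` spanned by decomposable elements. -/
def decDirections (U : Submodule ℂ (Matrix (Fin 2) (Fin 3) ℂ)) :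
    Set (Submodule ℂ (Matrix (Fin 2) (Fin 3) ℂ)) :=
  {D | ∃ A : Matrix (Fin 2) (Fin 3) ℂ,
    A ∈ U ∧ A ≠ 0 ∧ Decomposable A ∧ D = Submodule.span ℂ {A}}

/-!
The smallest `V₀` is the span of all rows of elements of `U`. Let `B = h₂ ⊗ y` span the
decomposable direction, complete `h₂` to a basis `(h₁, h₂)` of `ℂ²` and write a second generator
of `U` as `A = h₁ ⊗ x + h₂ ⊗ z`. Then `V₀ = span {x, y, z}`. Uniqueness of the direction forces
`x ≠ 0` (otherwise `A` is decomposable) and `z ∉ span {x, y}` (if `z = a x + b y`, then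
`A - b B = (h₁ + a h₂) ⊗ x` is decomposable). Hence `dim V₀ = 2` when `y` is a multiple of `x`,
giving the first normal form, and `dim V₀ = 3` otherwise, giving the second.
-/

open Submodule

section LinearAlgebra

variable {K V : Type*} [Field K] [AddCommGroup V] [Module K V]

theorem range_vecCons₃ {α : Type*} (x y z : α) : Set.range ![x, y, z] = {x, y, z} := by
  simp only [range_cons, range_empty, Set.union_empty, Set.singleton_union]

theorem linearIndependent_pair_of_notMem_span_singleton {x y : V} (hx : x ≠ 0)
    (hy : y ∉ span K {x}) : LinearIndependent K ![x, y] :=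
  (LinearIndependent.pair_iff' hx).2 fun a ha => hy (mem_span_singleton.2 ⟨a, ha⟩)

theorem linearIndependent_vecCons₃ {x y z : V} (hx : x ≠ 0) (hy : y ∉ span K {x})
    (hz : z ∉ span K {x, y}) : LinearIndependent K ![x, y, z] := by
  have hsnoc : ![x, y, z] = Fin.snoc ![x, y] z := by ext i; fin_cases i <;> rfl
  rw [hsnoc, linearIndependent_finSnoc, range_cons_cons_empty]
  exact ⟨linearIndependent_pair_of_notMem_span_singleton hx hy, hz⟩

theorem exists_notMem_span_singleton_eq_span_pair [FiniteDimensional K V] {U : Submodule K V}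
    (hU : Module.finrank K U = 2) {B : V} (hB : B ∈ U) (hB0 : B ≠ 0) :
    ∃ A ∈ U, A ∉ span K {B} ∧ U = span K {A, B} := by
  have hBU : span K {B} < U := by
    refine lt_of_le_of_ne ((span_singleton_le_iff_mem _ _).2 hB) fun h => ?_
    have := finrank_span_singleton (K := K) hB0
    rw [h, hU] at this
    exact absurd this (by norm_num)
  obtain ⟨A, hAU, hAB⟩ := SetLike.exists_of_lt hBU
  refine ⟨A, hAU, hAB, (eq_of_le_of_finrank_eq ?_ ?_).symm⟩
  · exact span_le.2 (Set.insert_subset hAU (Set.singleton_subset_iff.2 hB))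
  · have hli : LinearIndependent K ![A, B] :=
      linearIndependent_fin2.2 ⟨hB0, fun a ha => hAB (mem_span_singleton.2 ⟨a, ha⟩)⟩
    rw [hU, ← range_cons_cons_empty, finrank_span_eq_card hli, Fintype.card_fin]

end LinearAlgebra

namespace Matrix

theorem vecMulVec_eq_zero_iff {α m n : Type*} [MulZeroClass α] [NoZeroDivisors α] {a : m → α}
    {b : n → α} : vecMulVec a b = 0 ↔ a = 0 ∨ b = 0 := by
  simp only [← ext_iff, vecMulVec_apply, Matrix.zero_apply, mul_eq_zero, funext_iff,
    Pi.zero_apply, forall_or_left, forall_or_right]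

section RowSpace

variable {K m n : Type*}

def rowSpace [Semiring K] (U : Submodule K (Matrix m n K)) : Submodule K (n → K) :=
  span K (⋃ A ∈ U, Set.range A.row)

section Semiring

variable [Semiring K]

theorem rowSpace_le_iff {U : Submodule K (Matrix m n K)} {W : Submodule K (n → K)} :
    rowSpace U ≤ W ↔ ∀ A ∈ U, ∀ i, A i ∈ W := by
  simp only [rowSpace, span_le, Set.iUnion_subset_iff, Set.range_subset_iff, SetLike.mem_coe]
  rfl

theorem row_mem_rowSpace {U : Submodule K (Matrix m n K)} {A : Matrix m n K} (hA : A ∈ U)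
    (i : m) : A i ∈ rowSpace U :=
  subset_span (Set.mem_biUnion hA (Set.mem_range_self i))

theorem rowSpace_span (S : Set (Matrix m n K)) :
    rowSpace (span K S) = span K (⋃ A ∈ S, Set.range A.row) := by
  refine le_antisymm (rowSpace_le_iff.2 fun A hA i => ?_)
    (span_mono (Set.biUnion_subset_biUnion_left subset_span))
  induction hA using span_induction with
  | mem A hA => exact subset_span (Set.mem_biUnion hA (Set.mem_range_self i))
  | zero => exact zero_mem _
  | add A B _ _ hA hB => exact add_mem hA hB
  | smul c A _ hA => exact smul_mem _ c hA

end Semiring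

theorem span_range_row_mul_le [CommSemiring K] [Fintype m] {l : Type*} (M : Matrix l m K)
    (X : Matrix m n K) :
    span K (Set.range (M * X).row) ≤ span K (Set.range X.row) := by
  rw [span_le, ← range_vecMulLinear]
  rintro _ ⟨i, rfl⟩
  exact ⟨M i, rfl⟩

theorem span_range_row_mul_of_isUnit [CommRing K] [Fintype m] [DecidableEq m] {M : Matrix m m K}
    (hM : IsUnit M) (X : Matrix m n K) :
    span K (Set.range (M * X).row) = span K (Set.range X.row) := by
  refine le_antisymm (span_range_row_mul_le M X) ?_
  calc span K (Set.range X.row) = span K (Set.range (M⁻¹ * (M * X)).row) := by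
        rw [nonsing_inv_mul_cancel_left _ _ ((isUnit_iff_isUnit_det M).1 hM)]
    _ ≤ _ := span_range_row_mul_le _ _

theorem span_range_row_vecMulVec [Field K] {h : m → K} (hh : h ≠ 0) (x : n → K) :
    span K (Set.range (vecMulVec h x).row) = span K {x} := by
  obtain ⟨i, hi⟩ := Function.ne_iff.1 hh
  refine le_antisymm (span_le.2 ?_) (span_le.2 ?_)
  · rintro _ ⟨j, rfl⟩
    exact mem_span_singleton.2 ⟨h j, by ext; simp [Matrix.row, vecMulVec_apply]⟩
  · rw [Set.singleton_subset_iff]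
    have hx : (h i)⁻¹ • (vecMulVec h x).row i = x := by
      ext; simp_all [Matrix.row, vecMulVec_apply]
    have := smul_mem _ (h i)⁻¹
      (subset_span (R := K) (Set.mem_range_self (f := (vecMulVec h x).row) i))
    rwa [hx] at this

end RowSpace

section TwoRows

variable {K n : Type*} [Field K]

theorem transpose_of_mul_of (h₁ h₂ : Fin 2 → K) (x z : n → K) :
    (of ![h₁, h₂])ᵀ * of ![x, z] = vecMulVec h₁ x + vecMulVec h₂ z := by
  ext i j
  simp [mul_apply, Fin.sum_univ_two, vecMulVec_apply]

theorem isUnit_transpose_of_linearIndependent {h₁ h₂ : Fin 2 → K}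
    (hh : LinearIndependent K ![h₁, h₂]) : IsUnit (of ![h₁, h₂])ᵀ :=
  (isUnit_transpose _).2 (linearIndependent_rows_iff_isUnit.1 hh)

theorem span_range_row_vecMulVec_add_vecMulVec {h₁ h₂ : Fin 2 → K}
    (hh : LinearIndependent K ![h₁, h₂]) (x z : n → K) :
    span K (Set.range (vecMulVec h₁ x + vecMulVec h₂ z).row) = span K {x, z} := by
  rw [← transpose_of_mul_of,
    span_range_row_mul_of_isUnit (isUnit_transpose_of_linearIndependent hh),
    show (of ![x, z]).row = ![x, z] from rfl, range_cons_cons_empty]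

theorem exists_eq_vecMulVec_add_vecMulVec {h₁ h₂ : Fin 2 → K}
    (hh : LinearIndependent K ![h₁, h₂]) (A : Matrix (Fin 2) n K) :
    ∃ x z : n → K, A = vecMulVec h₁ x + vecMulVec h₂ z := by
  set X := ((of ![h₁, h₂])ᵀ)⁻¹ * A
  refine ⟨X 0, X 1, ?_⟩
  have hX : of ![X 0, X 1] = X := by ext i j; fin_cases i <;> rfl
  rw [← transpose_of_mul_of, hX, mul_nonsing_inv_cancel_left _ _
    ((isUnit_iff_isUnit_det _).1 (isUnit_transpose_of_linearIndependent hh))]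

variable {h₁ h₂ : Fin 2 → K}

theorem rowSpace_span_normalForm (hh : LinearIndependent K ![h₁, h₂]) (x y z : n → K) :
    rowSpace (span K {vecMulVec h₁ x + vecMulVec h₂ z, vecMulVec h₂ y}) = span K {x, y, z} := by
  have hh₂ : h₂ ≠ 0 := (linearIndependent_fin2.1 hh).1
  rw [rowSpace_span, Set.biUnion_insert, Set.biUnion_singleton, span_union,
    span_range_row_vecMulVec_add_vecMulVec hh, span_range_row_vecMulVec hh₂, ← span_union]
  congr 1
  ext w
  simp only [Set.mem_union, Set.mem_insert_iff, Set.mem_singleton_iff]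
  tauto

theorem finrank_rowSpace_span_normalForm_two (hh : LinearIndependent K ![h₁, h₂]) {x z : n → K}
    (hxz : LinearIndependent K ![x, z]) :
    Module.finrank K (rowSpace (span K {vecMulVec h₁ x + vecMulVec h₂ z, vecMulVec h₂ x})) = 2 := by
  rw [rowSpace_span_normalForm hh, Set.insert_eq_of_mem (Set.mem_insert _ _),
    ← range_cons_cons_empty, finrank_span_eq_card hxz, Fintype.card_fin]

theorem finrank_rowSpace_span_normalForm_three (hh : LinearIndependent K ![h₁, h₂])
    {x y z : n → K} (hxyz : LinearIndependent K ![x, y, z]) :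
    Module.finrank K (rowSpace (span K {vecMulVec h₁ x + vecMulVec h₂ z, vecMulVec h₂ y})) = 3 := by
  rw [rowSpace_span_normalForm hh, ← range_vecCons₃, finrank_span_eq_card hxyz, Fintype.card_fin]

end TwoRows

end Matrix

theorem exists_vecMulVec_of_decDirections_eq_singleton
    {U : Submodule ℂ (Matrix (Fin 2) (Fin 3) ℂ)} (hone : ∃ D, decDirections U = {D}) :
    ∃ (h : Fin 2 → ℂ) (y : Fin 3 → ℂ), h ≠ 0 ∧ y ≠ 0 ∧ vecMulVec h y ∈ U ∧
      ∀ g x, vecMulVec g x ∈ U → vecMulVec g x ∈ span ℂ {vecMulVec h y} := by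
  obtain ⟨D, hD⟩ := hone
  obtain ⟨_, hBU, -, ⟨h, y, hh, hy, rfl⟩, rfl⟩ : D ∈ decDirections U := hD ▸ rfl
  refine ⟨h, y, hh, hy, hBU, fun g x hgx => ?_⟩
  by_cases hgx0 : vecMulVec g x = 0
  · rw [hgx0]; exact zero_mem _
  obtain ⟨hg, hx⟩ : g ≠ 0 ∧ x ≠ 0 := not_or.1 (vecMulVec_eq_zero_iff.not.1 hgx0)
  have hdir : span ℂ {vecMulVec g x} ∈ decDirections U :=
    ⟨_, hgx, hgx0, ⟨g, x, hg, hx, rfl⟩, rfl⟩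
  rw [hD, Set.mem_singleton_iff] at hdir
  exact hdir ▸ mem_span_singleton_self _

theorem exists_normalForm_of_decDirections_eq_singleton
    {U : Submodule ℂ (Matrix (Fin 2) (Fin 3) ℂ)} (hU : Module.finrank ℂ U = 2)
    (hone : ∃ D, decDirections U = {D}) :
    ∃ (h₁ h₂ : Fin 2 → ℂ) (x y z : Fin 3 → ℂ), LinearIndependent ℂ ![h₁, h₂] ∧ x ≠ 0 ∧ y ≠ 0 ∧
      z ∉ span ℂ {x, y} ∧ U = span ℂ {vecMulVec h₁ x + vecMulVec h₂ z, vecMulVec h₂ y} := by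
  obtain ⟨h₂, y, hh₂, hy, hBU, hdec⟩ := exists_vecMulVec_of_decDirections_eq_singleton hone
  have hB0 : vecMulVec h₂ y ≠ 0 := fun h => (vecMulVec_eq_zero_iff.1 h).elim hh₂ hy
  obtain ⟨A, hAU, hAB, hUAB⟩ := exists_notMem_span_singleton_eq_span_pair hU hBU hB0
  obtain ⟨h₁, hh⟩ : ∃ h₁, LinearIndependent ℂ ![h₁, h₂] := by
    obtain ⟨h₁, hh⟩ := exists_linearIndependent_pair_of_one_lt_finrank
      (by rw [Module.finrank_fin_fun]; norm_num) hh₂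
    exact ⟨h₁, LinearIndependent.pair_symm_iff.1 hh⟩
  obtain ⟨x, z, rfl⟩ := exists_eq_vecMulVec_add_vecMulVec hh A
  refine ⟨h₁, h₂, x, y, z, hh, ?_, hy, ?_, hUAB⟩
  · rintro rfl
    have hA : vecMulVec h₁ 0 + vecMulVec h₂ z = vecMulVec h₂ z := by
      ext; simp [vecMulVec_apply]
    rw [hA] at hAU hAB
    exact hAB (hdec _ _ hAU)
  · intro hz
    obtain ⟨a, b, rfl⟩ := mem_span_pair.1 hz
    have hsub : vecMulVec h₁ x + vecMulVec h₂ (a • x + b • y) - b • vecMulVec h₂ y =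
        vecMulVec (h₁ + a • h₂) x := by
      rw [vecMulVec_add, add_vecMulVec, vecMulVec_smul, vecMulVec_smul, smul_vecMulVec]
      abel
    have := hdec _ _ (hsub ▸ sub_mem hAU (smul_mem _ b hBU))
    rw [← hsub] at this
    exact hAB (by simpa using add_mem this (smul_mem _ b (mem_span_singleton_self _)))

/-- Let `U ⊆ ℂ² ⊗ ℂ³` be 2-dimensional with exactly one decomposable direction, and let
`V₀ ⊆ ℂ³` be the smallest subspace with `U ⊆ ℂ² ⊗ V₀` (i.e. all rows of all elements of `U`
lie in `V₀`, and `V₀` is minimal with this property). Then `dim V₀ ∈ {2, 3}`; moreover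
`dim V₀ = 2` iff `U = span {h₁ ⊗ x + h₂ ⊗ z, h₂ ⊗ x}` with `(h₁, h₂)` a basis of `ℂ²` and
`(x, z)` linearly independent, and `dim V₀ = 3` iff
`U = span {h₁ ⊗ x + h₂ ⊗ z, h₂ ⊗ x'}` with `(h₁, h₂)` a basis of `ℂ²` and `(x, x', z)` a
basis of `ℂ³`. In particular the two normal forms are mutually exclusive. -/
theorem stmt_9 (U : Submodule ℂ (Matrix (Fin 2) (Fin 3) ℂ))
    (hU : Module.finrank ℂ U = 2)
    (hone : ∃ D : Submodule ℂ (Matrix (Fin 2) (Fin 3) ℂ), decDirections U = {D})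
    (V₀ : Submodule ℂ (Fin 3 → ℂ))
    (hV₀ : ∀ A ∈ U, ∀ i : Fin 2, A i ∈ V₀)
    (hmin : ∀ W : Submodule ℂ (Fin 3 → ℂ), (∀ A ∈ U, ∀ i : Fin 2, A i ∈ W) → V₀ ≤ W) :
    (Module.finrank ℂ V₀ = 2 ∨ Module.finrank ℂ V₀ = 3) ∧
    (Module.finrank ℂ V₀ = 2 ↔
      ∃ (h₁ h₂ : Fin 2 → ℂ) (x z : Fin 3 → ℂ),
        LinearIndependent ℂ ![h₁, h₂] ∧ LinearIndependent ℂ ![x, z] ∧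
        U = Submodule.span ℂ {vecMulVec h₁ x + vecMulVec h₂ z, vecMulVec h₂ x}) ∧
    (Module.finrank ℂ V₀ = 3 ↔
      ∃ (h₁ h₂ : Fin 2 → ℂ) (x x' z : Fin 3 → ℂ),
        LinearIndependent ℂ ![h₁, h₂] ∧ LinearIndependent ℂ ![x, x', z] ∧
        U = Submodule.span ℂ {vecMulVec h₁ x + vecMulVec h₂ z, vecMulVec h₂ x'}) := by
  rw [le_antisymm (hmin _ fun A hA i => row_mem_rowSpace hA i) (rowSpace_le_iff.2 hV₀)]
  obtain ⟨h₁, h₂, x, y, z, hh, hx, hy, hz, hUeq⟩ :=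
    exists_normalForm_of_decDirections_eq_singleton hU hone
  by_cases hyx : y ∈ span ℂ {x}
  · obtain ⟨c, rfl⟩ := mem_span_singleton.1 hyx
    have hc : c ≠ 0 := by rintro rfl; exact hy (zero_smul _ _)
    have hU₂ : U = span ℂ {vecMulVec h₁ x + vecMulVec h₂ z, vecMulVec h₂ x} := by
      rw [hUeq, vecMulVec_smul, span_insert, span_insert, span_singleton_smul_eq hc.isUnit]
    have hxz : LinearIndependent ℂ ![x, z] :=
      linearIndependent_pair_of_notMem_span_singleton hx
        fun h => hz (span_mono (Set.singleton_subset_iff.2 (Set.mem_insert _ _)) h)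
    have h2 := hU₂ ▸ finrank_rowSpace_span_normalForm_two hh hxz
    refine ⟨Or.inl h2, iff_of_true h2 ⟨h₁, h₂, x, z, hh, hxz, hU₂⟩, iff_of_false (by omega) ?_⟩
    rintro ⟨g₁, g₂, x', y', z', hg, hxyz', rfl⟩
    rw [finrank_rowSpace_span_normalForm_three hg hxyz'] at h2
    omega
  · have hxyz := linearIndependent_vecCons₃ hx hyx hz
    have h3 := hUeq ▸ finrank_rowSpace_span_normalForm_three hh hxyz
    refine ⟨Or.inr h3, iff_of_false (by omega) ?_, iff_of_true h3 ⟨h₁, h₂, x, y, z, hh, hxyz, hUeq⟩⟩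
    rintro ⟨g₁, g₂, x', z', hg, hxz', rfl⟩
    rw [finrank_rowSpace_span_normalForm_two hg hxz'] at h3
    omega
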